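/- arXiv:1912.11391 — 4 statements merged into one kernel-verified Lean document; each statement's English description precedes it below -/
import Mathlib

section
/- Let d, k, m be positive integers, Δt > 0, M an d×d real matrix, and for each index j let q_j ∈ ℝ^d, let B_j be a real k×d matrix (the strain Jacobian at the half step between q_j and q_{j+1}), s_j ∈ ℝ^k, G_j a real m×d matrix and χ_j ∈ ℝ^m. Define p⁻_j = M(q_{j+1} − q_j)/Δt + (Δt/2)(B_j)ᵀ s_j + (Δt/2)(G_j)ᵀ χ_j and p⁺_j = M(q_j − q_{j−1})/Δt − (Δt/2)(B_{j−1})ᵀ s_{j−1} − (Δt/2)(G_j)ᵀ χ_j. Let τ ∈ ℝ^d be a direction of translation invariance, i.e. B_{i−1} τ = 0, G_{i−1} τ = 0 and G_i τ = 0. Then (a) ⟨p⁺_i, τ⟩ = ⟨p⁻_{i−1}, τ⟩; and (b) if moreover the discrete balance equation p⁺_i = p⁻_i holds, then ⟨p⁻_i, τ⟩ = ⟨p⁻_{i−1}, τ⟩, i.e. the discrete linear momentum in the direction τ is an invariant of the discrete motion. -/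
open Matrix

lemma aux_transpose_dot {k d : ℕ} (A : Matrix (Fin k) (Fin d) ℝ) (x : Fin k → ℝ)
    (τ : Fin d → ℝ) (h : A.mulVec τ = 0) : Aᵀ.mulVec x ⬝ᵥ τ = 0 := by
  rw [mulVec_transpose, ← dotProduct_mulVec, h, dotProduct_zero]

/-- Conservation of the discrete linear momentum along a direction of
translation invariance for the variational-integrator-inspired scheme. -/
theorem discrete_linear_momentum_conservation
    (d k m : ℕ) (hd : 0 < d) (hk : 0 < k) (hm : 0 < m)
    (Δt : ℝ) (hΔt : 0 < Δt)
    (M : Matrix (Fin d) (Fin d) ℝ)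
    (q : ℤ → Fin d → ℝ)
    (B : ℤ → Matrix (Fin k) (Fin d) ℝ)
    (s : ℤ → Fin k → ℝ)
    (G : ℤ → Matrix (Fin m) (Fin d) ℝ)
    (χ : ℤ → Fin m → ℝ)
    (pminus pplus : ℤ → Fin d → ℝ)
    (hpminus : ∀ j, pminus j =
      (1 / Δt) • M.mulVec (q (j + 1) - q j)
        + (Δt / 2) • (B j)ᵀ.mulVec (s j)
        + (Δt / 2) • (G j)ᵀ.mulVec (χ j))
    (hpplus : ∀ j, pplus j =
      (1 / Δt) • M.mulVec (q j - q (j - 1))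
        - (Δt / 2) • (B (j - 1))ᵀ.mulVec (s (j - 1))
        - (Δt / 2) • (G j)ᵀ.mulVec (χ j))
    (i : ℤ) (τ : Fin d → ℝ)
    (hBτ : (B (i - 1)).mulVec τ = 0)
    (hGτ1 : (G (i - 1)).mulVec τ = 0)
    (hGτ2 : (G i).mulVec τ = 0) :
    pplus i ⬝ᵥ τ = pminus (i - 1) ⬝ᵥ τ ∧
      (pplus i = pminus i → pminus i ⬝ᵥ τ = pminus (i - 1) ⬝ᵥ τ) := by
  have key : pplus i ⬝ᵥ τ = pminus (i - 1) ⬝ᵥ τ := by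
    rw [hpplus, hpminus]
    simp only [add_dotProduct, sub_dotProduct, smul_dotProduct,
      aux_transpose_dot _ _ _ hBτ, aux_transpose_dot _ _ _ hGτ1,
      aux_transpose_dot _ _ _ hGτ2, smul_zero, sub_zero, add_zero]
    ring_nf
  exact ⟨key, fun h => by rw [← h]; exact key⟩
end

section
/- Let K be a positive integer and set d = 3K, so that configurations q ∈ (ℝ³)^K are collections of K nodal vectors. Fix a ∈ ℝ³ and let ∈ ℝ^{d×d} be the block-diagonal matrix whose K diagonal 3×3 blocks are all equal to the skew matrix â with â x = a × x. Let Δt > 0, let M be a symmetric d×d real matrix with M Â = Â M, and for each index j let q_j ∈ (ℝ³)^K, B_j a real k×d matrix, s_j ∈ ℝ^k, G_j a real m×d matrix and χ_j ∈ ℝ^m, with discrete momenta p⁻_j = M(q_{j+1} − q_j)/Δt + (Δt/2)(B_j)ᵀ s_j + (Δt/2)(G_j)ᵀ χ_j and p⁺_j = M(q_j − q_{j−1})/Δt − (Δt/2)(B_{j−1})ᵀ s_{j−1} − (Δt/2)(G_j)ᵀ χ_j. Assume the rotational-invariance (orthogonality) conditions s_j · (B_j (Â q_k)) = 0 and χ_j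 · (G_j (Â q_k)) = 0 for all j ∈ {i−1, i} and k ∈ {i−1, i, i+1}, and assume the discrete balance equation p⁺_i = p⁻_i. Define the discrete angular momenta j⁻_i = Σ_{a=1}^{K} (q_i)_a × (p⁻_i)_a and j⁺_i = Σ_{a=1}^{K} (q_{i+1})_a × (p⁺_i)_a, where ( · )_a denotes the a-th nodal 3-vector. Then (a) j⁺_i · a = j⁻_i · a, so a unique discrete angular momentum component along a exists; and (b) j⁻_i · a = j⁻_{i−1} · a, i.e. the discrete angular momentum component along a is an invariant of the discrete motion. -/
open Matrix

/-- The skew (hat) matrix of a 3-vector: `hat3 a *ᵥ x = a ×₃ x`. -/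
def hat3 (a : Fin 3 → ℝ) : Matrix (Fin 3) (Fin 3) ℝ :=
  !![0, -a 2, a 1; a 2, 0, -a 0; -a 1, a 0, 0]

/-- The cross product of two 3-vectors. -/
def cross3 (u v : Fin 3 → ℝ) : Fin 3 → ℝ :=
  ![u 1 * v 2 - u 2 * v 1, u 2 * v 0 - u 0 * v 2, u 0 * v 1 - u 1 * v 0]

lemma cross_dot (u v a : Fin 3 → ℝ) :
    cross3 u v ⬝ᵥ a = v ⬝ᵥ (hat3 a).mulVec u := by
  simp [cross3, hat3, dotProduct, Matrix.mulVec, Fin.sum_univ_three]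
  ring

lemma hat3_entry (a : Fin 3 → ℝ) (r r' : Fin 3) : hat3 a r' r = -(hat3 a r r') := by
  fin_cases r <;> fin_cases r' <;> simp [hat3]

lemma bigkey {K : ℕ} (a : Fin 3 → ℝ)
    (Ahat : Matrix (Fin K × Fin 3) (Fin K × Fin 3) ℝ)
    (hAhat : ∀ p q' : Fin K × Fin 3,
      Ahat p q' = if p.1 = q'.1 then hat3 a p.2 q'.2 else 0)
    (p q : Fin K × Fin 3 → ℝ) :
    (∑ nd : Fin K, cross3 (fun r => q (nd, r)) (fun r => p (nd, r))) ⬝ᵥ a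
      = p ⬝ᵥ Ahat.mulVec q := by
  have hmv : ∀ nd r, Ahat.mulVec q (nd, r) = ∑ r', hat3 a r r' * q (nd, r') := by
    intro nd r
    simp only [Matrix.mulVec, dotProduct, Fintype.sum_prod_type, hAhat]
    rw [Finset.sum_eq_single nd]
    · simp
    · intro b _ hb; simp [Ne.symm hb]
    · simp
  rw [show (∑ nd : Fin K, cross3 (fun r => q (nd, r)) fun r => p (nd, r)) ⬝ᵥ a
      = ∑ nd : Fin K, (cross3 (fun r => q (nd, r)) fun r => p (nd, r)) ⬝ᵥ a from by
    simp only [dotProduct, Finset.sum_apply, Finset.sum_mul]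
    exact Finset.sum_comm]
  rw [show (p ⬝ᵥ Ahat.mulVec q) = ∑ nd : Fin K, ∑ r : Fin 3,
      p (nd, r) * Ahat.mulVec q (nd, r) from by
    simp [dotProduct, Fintype.sum_prod_type]]
  refine Finset.sum_congr rfl fun nd _ => ?_
  rw [cross_dot]
  rw [show ∑ r : Fin 3, p (nd, r) * Ahat.mulVec q (nd, r)
      = ∑ r : Fin 3, p (nd, r) * ∑ r', hat3 a r r' * q (nd, r') from by
    refine Finset.sum_congr rfl fun r _ => by rw [hmv]]
  simp [dotProduct, Matrix.mulVec]

lemma skewF {n : Type*} [Fintype n] [DecidableEq n]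
    (M A : Matrix n n ℝ) (hMsymm : M.IsSymm) (hMA : M * A = A * M)
    (hA : Aᵀ = -A) (u v : n → ℝ) :
    M.mulVec u ⬝ᵥ A.mulVec v = -(M.mulVec v ⬝ᵥ A.mulVec u) := by
  have h1 : M.mulVec u ⬝ᵥ A.mulVec v = u ⬝ᵥ (M * A).mulVec v := by
    rw [dotProduct_comm, ← Matrix.mulVec_mulVec, Matrix.dotProduct_mulVec,
      dotProduct_comm, ← Matrix.mulVec_transpose, hMsymm.eq,
      Matrix.mulVec_mulVec]
  have h2 : M.mulVec v ⬝ᵥ A.mulVec u = -(u ⬝ᵥ (A * M).mulVec v) := by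
    rw [Matrix.dotProduct_mulVec, ← Matrix.mulVec_transpose, hA, Matrix.neg_mulVec,
      neg_dotProduct, Matrix.mulVec_mulVec, dotProduct_comm]
  rw [h1, h2, hMA]
  ring

lemma transf {n k : Type*} [Fintype n] [Fintype k]
    (B : Matrix k n ℝ) (s : k → ℝ) (w : n → ℝ) :
    Bᵀ.mulVec s ⬝ᵥ w = s ⬝ᵥ B.mulVec w := by
  rw [Matrix.mulVec_transpose, ← Matrix.dotProduct_mulVec]

lemma auxsub {n : Type*} [Fintype n] [DecidableEq n]
    (M A : Matrix n n ℝ) (hMsymm : M.IsSymm) (hMA : M * A = A * M)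
    (hA : Aᵀ = -A) (u v : n → ℝ) :
    M.mulVec (u - v) ⬝ᵥ A.mulVec u = M.mulVec (u - v) ⬝ᵥ A.mulVec v := by
  have h0 : ∀ w : n → ℝ, M.mulVec w ⬝ᵥ A.mulVec w = 0 := fun w => by
    have := skewF M A hMsymm hMA hA w w; linarith
  rw [Matrix.mulVec_sub, sub_dotProduct, sub_dotProduct, h0, h0,
    skewF M A hMsymm hMA hA v u]
  ring

/-- Conservation of the discrete angular momentum component along an axis `a`
of rotational invariance for the variational-integrator-inspired scheme. -/
theorem discrete_angular_momentum_conservation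
    (K k m : ℕ) (hK : 0 < K) (hk : 0 < k) (hm : 0 < m)
    (a : Fin 3 → ℝ)
    (Ahat : Matrix (Fin K × Fin 3) (Fin K × Fin 3) ℝ)
    (hAhat : ∀ p q' : Fin K × Fin 3,
      Ahat p q' = if p.1 = q'.1 then hat3 a p.2 q'.2 else 0)
    (Δt : ℝ) (hΔt : 0 < Δt)
    (M : Matrix (Fin K × Fin 3) (Fin K × Fin 3) ℝ)
    (hMsymm : M.IsSymm) (hMA : M * Ahat = Ahat * M)
    (q : ℤ → Fin K × Fin 3 → ℝ)
    (B : ℤ → Matrix (Fin k) (Fin K × Fin 3) ℝ)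
    (s : ℤ → Fin k → ℝ)
    (G : ℤ → Matrix (Fin m) (Fin K × Fin 3) ℝ)
    (χ : ℤ → Fin m → ℝ)
    (pminus pplus : ℤ → Fin K × Fin 3 → ℝ)
    (hpminus : ∀ j, pminus j =
      (1 / Δt) • M.mulVec (q (j + 1) - q j)
        + (Δt / 2) • (B j)ᵀ.mulVec (s j)
        + (Δt / 2) • (G j)ᵀ.mulVec (χ j))
    (hpplus : ∀ j, pplus j =
      (1 / Δt) • M.mulVec (q j - q (j - 1))
        - (Δt / 2) • (B (j - 1))ᵀ.mulVec (s (j - 1))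
        - (Δt / 2) • (G j)ᵀ.mulVec (χ j))
    (i : ℤ)
    (hrotB : ∀ j ∈ ({i - 1, i} : Set ℤ), ∀ l ∈ ({i - 1, i, i + 1} : Set ℤ),
      s j ⬝ᵥ (B j).mulVec (Ahat.mulVec (q l)) = 0)
    (hrotG : ∀ j ∈ ({i - 1, i} : Set ℤ), ∀ l ∈ ({i - 1, i, i + 1} : Set ℤ),
      χ j ⬝ᵥ (G j).mulVec (Ahat.mulVec (q l)) = 0)
    (hbal : pplus i = pminus i)
    (jminus : ℤ → Fin 3 → ℝ)
    (hjminus : ∀ j, jminus j =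
      ∑ nd : Fin K, cross3 (fun r => q j (nd, r)) (fun r => pminus j (nd, r)))
    (jplus : Fin 3 → ℝ)
    (hjplus : jplus =
      ∑ nd : Fin K, cross3 (fun r => q (i + 1) (nd, r)) (fun r => pplus i (nd, r))) :
    jplus ⬝ᵥ a = jminus i ⬝ᵥ a ∧ jminus i ⬝ᵥ a = jminus (i - 1) ⬝ᵥ a := by
  have hAT : Ahatᵀ = -Ahat := by
    ext p q'
    simp only [Matrix.transpose_apply, Matrix.neg_apply, hAhat]
    by_cases h : p.1 = q'.1
    · rw [if_pos h, if_pos h.symm, hat3_entry]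
    · rw [if_neg h, if_neg (fun hh => h (Eq.symm hh)), neg_zero]
  have hsub : ∀ u v, M.mulVec (u - v) ⬝ᵥ Ahat.mulVec u
      = M.mulVec (u - v) ⬝ᵥ Ahat.mulVec v := fun u v =>
    auxsub M Ahat hMsymm hMA hAT u v
  have hB0 : ∀ j ∈ ({i - 1, i} : Set ℤ), ∀ l ∈ ({i - 1, i, i + 1} : Set ℤ),
      (B j)ᵀ.mulVec (s j) ⬝ᵥ Ahat.mulVec (q l) = 0 := fun j hj l hl => by
    rw [transf]; exact hrotB j hj l hl
  have hG0 : ∀ j ∈ ({i - 1, i} : Set ℤ), ∀ l ∈ ({i - 1, i, i + 1} : Set ℤ),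
      (G j)ᵀ.mulVec (χ j) ⬝ᵥ Ahat.mulVec (q l) = 0 := fun j hj l hl => by
    rw [transf]; exact hrotG j hj l hl
  have jm : ∀ j, jminus j ⬝ᵥ a = pminus j ⬝ᵥ Ahat.mulVec (q j) := fun j => by
    rw [hjminus j]; exact bigkey a Ahat hAhat _ _
  have jp : jplus ⬝ᵥ a = pplus i ⬝ᵥ Ahat.mulVec (q (i + 1)) := by
    rw [hjplus]; exact bigkey a Ahat hAhat _ _
  constructor
  · rw [jp, jm i, hbal, hpminus i]
    simp only [add_dotProduct, smul_dotProduct, smul_eq_mul,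
      hB0 i (by simp) (i + 1) (by simp), hB0 i (by simp) i (by simp),
      hG0 i (by simp) (i + 1) (by simp), hG0 i (by simp) i (by simp),
      mul_zero, add_zero]
    rw [hsub (q (i + 1)) (q i)]
  · rw [jm i, jm (i - 1), ← hbal, hpplus i, hpminus (i - 1),
      show (i - 1 + 1 : ℤ) = i from by ring]
    simp only [sub_dotProduct, add_dotProduct, smul_dotProduct,
      smul_eq_mul,
      hB0 (i - 1) (by simp) i (by simp), hB0 (i - 1) (by simp) (i - 1) (by simp),
      hG0 i (by simp) i (by simp), hG0 (i - 1) (by simp) (i - 1) (by simp),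
      mul_zero, add_zero, sub_zero]
    rw [hsub (q i) (q (i - 1))]
end

section
/- Under the setting of the fixNLP Lagrangian, assume additionally that e : ℝ^d → ℝ^k and g : ℝ^d → ℝ^m are quadratic polynomials (so that B(q) = De(q) and G(q) = Dg(q) are affine in q). Let U₂(s) be the constant matrix ∂_q(B(q)ᵀ s), U₁(a) the constant matrix ∂_q(B(q) a) for a ∈ ℝ^d, V(ν) the constant matrix ∂_q(G(q)ᵀ ν), and F(s) = N₀ᵀ( M/Δt + (Δt/4) U₂(s) ). Then the second Fréchet derivative of L at x = (q, e₊, s, λ, μ, ν) applied to directions Δx = (Δq, Δe, Δs, Δλ, Δμ, Δν) and δx = (δq, δe, δs, δλ, δμ, δν) equals δx · S Δx, where S is the symmetric block matrix with blocks S_{qq} = −¼ U₂(λ) + V(ν), S_{qs} = (Δt/4) U₁(N₀ μ)ᵀ, S_{qλ} = −½ B((q_i+q)/2)ᵀ, S_{qμ} = F(s)ᵀ, S_{qν} = G(q)ᵀ, S_{ee} = C, S_{eλ} = I, S_{ss} = C⁻¹, S_{sμ} = (Δt/2) B((q_i+q)/2) N₀, all remaining blocks zero, and the lower-triangular blocks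 the transposes of the corresponding upper-triangular ones. -/
/-!
Every summand of the Lagrangian is the dot product of an affine function of
`x = (q, e₊, s, λ, μ, ν)` with one of: another affine function, `e` or `g` at an affine point,
or `B(·)ᵀ` at an affine point applied to an affine vector. Each such summand is `C²`, so its
Hessian is the iterated line derivative, which only needs the first-order data: the Jacobian of
`e` (resp. `g`) and the constant derivative `U₂` (resp. `V`) of its transposed action, which is
therefore linear in the vector it acts on. Adding the seven Hessians and using the symmetry of
`C` and `C⁻¹`, together with `a ⬝ᵥ U₂ s *ᵥ v = s ⬝ᵥ U₁ a *ᵥ v` (both are the derivative of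
`p ↦ s ⬝ᵥ B p *ᵥ a` along `v`), gives the block matrix `S_fix`.
-/

open Matrix

noncomputable def matCLM {d k : ℕ} (A : Matrix (Fin k) (Fin d) ℝ) :
    (Fin d → ℝ) →L[ℝ] (Fin k → ℝ) :=
  LinearMap.toContinuousLinearMap A.mulVecLin

@[simp]
theorem matCLM_apply {d k : ℕ} (A : Matrix (Fin k) (Fin d) ℝ) (v : Fin d → ℝ) :
    matCLM A v = A *ᵥ v :=
  rfl

theorem matCLM_injective {d k : ℕ} : Function.Injective (matCLM (d := d) (k := k)) :=
  fun _ _ h => Matrix.toLin'.injective (LinearMap.ext fun v => congrArg (· v) h)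

theorem Matrix.IsHermitian.dotProduct_mulVec_comm {ι : Type*} [Fintype ι] {A : Matrix ι ι ℝ}
    (hA : A.IsHermitian) (v w : ι → ℝ) : v ⬝ᵥ A *ᵥ w = w ⬝ᵥ A *ᵥ v := by
  rw [← Matrix.dotProduct_transpose_mulVec, ← conjTranspose_eq_transpose_of_trivial, hA.eq]

section Calculus

variable {E F : Type*} [NormedAddCommGroup E] [NormedSpace ℝ E]
  [NormedAddCommGroup F] [NormedSpace ℝ F] {ι : Type*} [Fintype ι]

theorem HasDerivAt.dotProduct {u v : ℝ → ι → ℝ} {u' v' : ι → ℝ} {t : ℝ}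
    (hu : HasDerivAt u u' t) (hv : HasDerivAt v v' t) :
    HasDerivAt (fun t => u t ⬝ᵥ v t) (u' ⬝ᵥ v t + u t ⬝ᵥ v') t := by
  have h := HasDerivAt.fun_sum (u := Finset.univ) fun i _ =>
    (hasDerivAt_pi.1 hu i).fun_mul (hasDerivAt_pi.1 hv i)
  simpa only [_root_.dotProduct, Finset.sum_add_distrib] using h

@[fun_prop]
theorem ContDiff.dotProduct {n : WithTop ℕ∞} {u v : E → ι → ℝ}
    (hu : ContDiff ℝ n u) (hv : ContDiff ℝ n v) : ContDiff ℝ n fun x => u x ⬝ᵥ v x := by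
  unfold _root_.dotProduct
  exact ContDiff.sum fun i _ => (contDiff_pi.1 hu i).mul (contDiff_pi.1 hv i)

@[fun_prop]
theorem HasFDerivAt.const_mulVec {d k : ℕ} {f : E → Fin d → ℝ} {f' : E →L[ℝ] Fin d → ℝ} {x : E}
    (A : Matrix (Fin k) (Fin d) ℝ) (hf : HasFDerivAt f f' x) :
    HasFDerivAt (fun y => A *ᵥ f y) ((matCLM A).comp f') x :=
  (matCLM A).hasFDerivAt.comp x hf

theorem hasLineDerivAt_const (c : F) (y v : E) : HasLineDerivAt ℝ (fun _ => c) 0 y v :=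
  hasDerivAt_const 0 c

theorem HasLineDerivAt.add {u w : E → F} {u' w' : F} {y v : E}
    (hu : HasLineDerivAt ℝ u u' y v) (hw : HasLineDerivAt ℝ w w' y v) :
    HasLineDerivAt ℝ (fun y => u y + w y) (u' + w') y v :=
  HasDerivAt.add hu hw

theorem HasLineDerivAt.dotProduct {u w : E → ι → ℝ} {u' w' : ι → ℝ} {y v : E}
    (hu : HasLineDerivAt ℝ u u' y v) (hw : HasLineDerivAt ℝ w w' y v) :
    HasLineDerivAt ℝ (fun y => u y ⬝ᵥ w y) (u' ⬝ᵥ w y + u y ⬝ᵥ w') y v := by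
  simpa [HasLineDerivAt] using HasDerivAt.dotProduct hu hw

theorem eq_add_of_hasFDerivAt_const {f : E → F} {A : E →L[ℝ] F} (hf : ∀ y, HasFDerivAt f A y)
    (y : E) : f y = f 0 + A y := by
  have hg : ∀ y, HasFDerivAt (fun y => f 0 + A y) A y := fun y => A.hasFDerivAt.const_add _
  refine congrFun (eq_of_fderiv_eq (fun y => (hf y).differentiableAt)
    (fun y => (hg y).differentiableAt) (fun y => ?_) 0 (by simp)) y
  rw [(hf y).fderiv, (hg y).fderiv]

theorem contDiff_of_hasFDerivAt_const {f : E → F} {A : E →L[ℝ] F} (hf : ∀ y, HasFDerivAt f A y)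
    {n : WithTop ℕ∞} : ContDiff ℝ n f := by
  rw [funext (eq_add_of_hasFDerivAt_const hf)]
  fun_prop

theorem fderiv_fderiv_apply_eq_of_hasLineDerivAt {f : E → F} (hf : ContDiff ℝ 2 f)
    {φ : E → F} {x Δ δ : E} {c : F} (hφ : ∀ y, HasLineDerivAt ℝ f (φ y) y δ)
    (hc : HasLineDerivAt ℝ φ c x Δ) : fderiv ℝ (fderiv ℝ f) x Δ δ = c := by
  have hdf : Differentiable ℝ (fderiv ℝ f) :=
    (hf.fderiv_right (m := 1) (by norm_num)).differentiable (by norm_num)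
  have hφ_eq : (fun y => fderiv ℝ f y δ) = φ := funext fun y =>
    ((hf.differentiable (by norm_num) y).hasFDerivAt.hasLineDerivAt δ).unique (hφ y)
  have h := (hdf x).hasFDerivAt.clm_apply (hasFDerivAt_const δ x)
  rw [hφ_eq] at h
  simpa using (h.hasLineDerivAt Δ).unique hc

theorem fderiv_fderiv_add_apply {f g : E → F} (hf : ContDiff ℝ 2 f) (hg : ContDiff ℝ 2 g)
    (x Δ δ : E) :
    fderiv ℝ (fderiv ℝ fun y => f y + g y) x Δ δ =
      fderiv ℝ (fderiv ℝ f) x Δ δ + fderiv ℝ (fderiv ℝ g) x Δ δ := by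
  have h := congrArg (· ![Δ, δ]) (iteratedFDeriv_add_apply (x := x) hf.contDiffAt hg.contDiffAt)
  simp only [iteratedFDeriv_two_apply, _root_.add_apply] at h
  exact h

/-- Requiring `f` to be `C²` on the whole space makes the predicate additive. -/
def HasHessianAt (f : E → F) (H : E → E → F) (x : E) : Prop :=
  ContDiff ℝ 2 f ∧ ∀ Δ δ, fderiv ℝ (fderiv ℝ f) x Δ δ = H Δ δ

theorem HasHessianAt.add {f g : E → F} {H K : E → E → F} {x : E} (hf : HasHessianAt f H x)
    (hg : HasHessianAt g K x) :
    HasHessianAt (fun y => f y + g y) (fun Δ δ => H Δ δ + K Δ δ) x :=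
  ⟨hf.1.add hg.1, fun Δ δ => by rw [fderiv_fderiv_add_apply hf.1 hg.1, hf.2, hg.2]⟩

theorem HasHessianAt.congr {f g : E → F} {H : E → E → F} {x : E} (h : HasHessianAt f H x)
    (hfg : ∀ y, f y = g y) : HasHessianAt g H x :=
  funext hfg ▸ h

theorem hasHessianAt_of_hasLineDerivAt {f : E → F} {f' H : E → E → F} {x : E}
    (hf : ContDiff ℝ 2 f) (hf' : ∀ y δ, HasLineDerivAt ℝ f (f' y δ) y δ)
    (hH : ∀ Δ δ, HasLineDerivAt ℝ (fun y => f' y δ) (H Δ δ) x Δ) : HasHessianAt f H x :=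
  ⟨hf, fun Δ δ => fderiv_fderiv_apply_eq_of_hasLineDerivAt hf (fun y => hf' y δ) (hH Δ δ)⟩

theorem hasHessianAt_dotProduct {a b : E → ι → ℝ} {A B : E →L[ℝ] ι → ℝ} (x : E)
    (ha : ∀ y, HasFDerivAt a A y) (hb : ∀ y, HasFDerivAt b B y) :
    HasHessianAt (fun y => a y ⬝ᵥ b y) (fun Δ δ => A δ ⬝ᵥ B Δ + A Δ ⬝ᵥ B δ) x := by
  refine hasHessianAt_of_hasLineDerivAt (f' := fun y δ => A δ ⬝ᵥ b y + a y ⬝ᵥ B δ)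
    ((contDiff_of_hasFDerivAt_const ha).dotProduct (contDiff_of_hasFDerivAt_const hb))
    (fun y δ => ((ha y).hasLineDerivAt δ).dotProduct ((hb y).hasLineDerivAt δ)) fun Δ δ => ?_
  convert ((hasLineDerivAt_const _ x Δ).dotProduct ((hb x).hasLineDerivAt Δ)).add
    (((ha x).hasLineDerivAt Δ).dotProduct (hasLineDerivAt_const _ x Δ)) using 1
  simp

section MatrixFamily

variable {d j k : ℕ}

theorem isLinearMap_of_hasFDerivAt_mulVec {Ψ : (Fin d → ℝ) → Matrix (Fin k) (Fin j) ℝ}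
    {W : (Fin j → ℝ) → Matrix (Fin k) (Fin d) ℝ} {p : Fin d → ℝ}
    (hW : ∀ a, HasFDerivAt (fun p => Ψ p *ᵥ a) (matCLM (W a)) p) : IsLinearMap ℝ W := by
  constructor
  · intro a b
    apply matCLM_injective
    refine (hW (a + b)).unique (((hW a).add (hW b)).congr_of_eventuallyEq ?_ |>.congr_fderiv ?_)
    · exact Filter.Eventually.of_forall fun p => mulVec_add _ _ _
    · ext1 v; simp [matCLM]
  · intro c a
    apply matCLM_injective
    refine (hW (c • a)).unique (((hW a).const_smul c).congr_of_eventuallyEq ?_ |>.congr_fderiv ?_)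
    · exact Filter.Eventually.of_forall fun p => mulVec_smul _ _ _
    · ext1 v; simp [matCLM]

theorem dotProduct_mulVec_comm_of_hasFDerivAt {Ψ : (Fin d → ℝ) → Matrix (Fin k) (Fin j) ℝ}
    {U₁ : (Fin j → ℝ) → Matrix (Fin k) (Fin d) ℝ} {U₂ : (Fin k → ℝ) → Matrix (Fin j) (Fin d) ℝ}
    {p : Fin d → ℝ}
    (hU₁ : ∀ a, HasFDerivAt (fun p => Ψ p *ᵥ a) (matCLM (U₁ a)) p)
    (hU₂ : ∀ s, HasFDerivAt (fun p => (Ψ p)ᵀ *ᵥ s) (matCLM (U₂ s)) p) (a : Fin j → ℝ)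
    (s : Fin k → ℝ) (v : Fin d → ℝ) : a ⬝ᵥ U₂ s *ᵥ v = s ⬝ᵥ U₁ a *ᵥ v := by
  have h₁ := (hasLineDerivAt_const s p v).dotProduct ((hU₁ a).hasLineDerivAt v)
  have h₂ := (hasLineDerivAt_const a p v).dotProduct ((hU₂ s).hasLineDerivAt v)
  simp_rw [Matrix.dotProduct_transpose_mulVec] at h₂
  simpa using h₂.unique h₁

end MatrixFamily

section AffineJacobian

variable {d k : ℕ} {J : (Fin d → ℝ) → Matrix (Fin k) (Fin d) ℝ}
  {W : (Fin k → ℝ) → Matrix (Fin d) (Fin d) ℝ}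

theorem contDiff_matCLM_transpose
    (hW : ∀ a p, HasFDerivAt (fun p => (J p)ᵀ *ᵥ a) (matCLM (W a)) p) {n : WithTop ℕ∞} :
    ContDiff ℝ n fun p => matCLM (J p)ᵀ :=
  contDiff_clm_apply_iff.2 fun a => contDiff_of_hasFDerivAt_const (hW a)

theorem contDiff_two_of_hasFDerivAt_matCLM {φ : (Fin d → ℝ) → Fin k → ℝ}
    (hJ : ∀ p, HasFDerivAt φ (matCLM (J p)) p)
    (hW : ∀ a p, HasFDerivAt (fun p => (J p)ᵀ *ᵥ a) (matCLM (W a)) p) : ContDiff ℝ 2 φ := by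
  have hJc : ContDiff ℝ 1 fun p => matCLM (J p) := by
    refine contDiff_clm_apply_iff.2 fun v => contDiff_pi.2 fun i => ?_
    have hrow : (fun p => matCLM (J p) v i) = fun p => v ⬝ᵥ (J p)ᵀ *ᵥ Pi.single i 1 := by
      funext p
      rw [dotProduct_transpose_mulVec, single_one_dotProduct]
      rfl
    rw [hrow]
    exact contDiff_const.dotProduct (contDiff_of_hasFDerivAt_const (hW _))
  exact contDiff_succ_iff_hasFDerivAt.2 ⟨_, hJc, hJ⟩

theorem hasLineDerivAt_transpose_mulVec
    (hW : ∀ a p, HasFDerivAt (fun p => (J p)ᵀ *ᵥ a) (matCLM (W a)) p)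
    {p : E → Fin d → ℝ} {c : E → Fin k → ℝ} {P : E →L[ℝ] Fin d → ℝ} {C : E →L[ℝ] Fin k → ℝ}
    (hp : ∀ y, HasFDerivAt p P y) (hc : ∀ y, HasFDerivAt c C y) (y v : E) :
    HasLineDerivAt ℝ (fun y => (J (p y))ᵀ *ᵥ c y) (W (c y) *ᵥ P v + (J (p y))ᵀ *ᵥ C v) y v := by
  have hsplit : (fun t : ℝ => (J (p (y + t • v)))ᵀ *ᵥ c (y + t • v)) =
      fun t => (J (p (y + t • v)))ᵀ *ᵥ c y + t • (J (p (y + t • v)))ᵀ *ᵥ C v := by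
    funext t
    rw [eq_add_of_hasFDerivAt_const hc (y + t • v), eq_add_of_hasFDerivAt_const hc y, map_add,
      map_smul, ← add_assoc, mulVec_add, mulVec_smul]
  have h₁ := ((hW (c y) (p y)).comp y (hp y)).hasLineDerivAt v
  have h₂ := ((hW (C v) (p y)).comp y (hp y)).hasLineDerivAt v
  unfold HasLineDerivAt
  rw [hsplit]
  convert HasDerivAt.fun_add h₁ ((hasDerivAt_id' (0 : ℝ)).fun_smul h₂) using 1 <;> simp

theorem IsLinearMap.hasLineDerivAt_mulVec (hW : IsLinearMap ℝ W) {c : E → Fin k → ℝ}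
    {C : E →L[ℝ] Fin k → ℝ} (hc : ∀ y, HasFDerivAt c C y) (x Δ : E) (v : Fin d → ℝ) :
    HasLineDerivAt ℝ (fun y => W (c y) *ᵥ v) (W (C Δ) *ᵥ v) x Δ := by
  have hline : (fun t : ℝ => W (c (x + t • Δ)) *ᵥ v) =
      fun t => W (c x) *ᵥ v + t • W (C Δ) *ᵥ v := by
    funext t
    rw [eq_add_of_hasFDerivAt_const hc (x + t • Δ), eq_add_of_hasFDerivAt_const hc x,
      _root_.map_add, _root_.map_smul, ← add_assoc, hW.map_add, hW.map_smul, add_mulVec,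
      smul_mulVec]
  unfold HasLineDerivAt
  rw [hline]
  simpa using ((hasDerivAt_id' (0 : ℝ)).smul_const (W (C Δ) *ᵥ v)).const_add (W (c x) *ᵥ v)

theorem hasHessianAt_dotProduct_comp {φ : (Fin d → ℝ) → Fin k → ℝ} (x : E)
    (hJ : ∀ p, HasFDerivAt φ (matCLM (J p)) p)
    (hW : ∀ a p, HasFDerivAt (fun p => (J p)ᵀ *ᵥ a) (matCLM (W a)) p)
    {a : E → Fin k → ℝ} {p : E → Fin d → ℝ} {A : E →L[ℝ] Fin k → ℝ} {P : E →L[ℝ] Fin d → ℝ}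
    (ha : ∀ y, HasFDerivAt a A y) (hp : ∀ y, HasFDerivAt p P y) :
    HasHessianAt (fun y => a y ⬝ᵥ φ (p y))
      (fun Δ δ => A δ ⬝ᵥ J (p x) *ᵥ P Δ + A Δ ⬝ᵥ J (p x) *ᵥ P δ + P δ ⬝ᵥ W (a x) *ᵥ P Δ) x := by
  have hφp : ∀ y, HasFDerivAt (fun y => φ (p y)) ((matCLM (J (p y))).comp P) y :=
    fun y => (hJ (p y)).comp y (hp y)
  refine hasHessianAt_of_hasLineDerivAt
    (f' := fun y δ => A δ ⬝ᵥ φ (p y) + P δ ⬝ᵥ (J (p y))ᵀ *ᵥ a y)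
    ((contDiff_of_hasFDerivAt_const ha).dotProduct
      ((contDiff_two_of_hasFDerivAt_matCLM hJ hW).comp (contDiff_of_hasFDerivAt_const hp)))
    (fun y δ => ?_) fun Δ δ => ?_
  · convert ((ha y).hasLineDerivAt δ).dotProduct ((hφp y).hasLineDerivAt δ) using 1
    simp [Matrix.dotProduct_transpose_mulVec]
  · convert ((hasLineDerivAt_const _ x Δ).dotProduct ((hφp x).hasLineDerivAt Δ)).add
      ((hasLineDerivAt_const _ x Δ).dotProduct (hasLineDerivAt_transpose_mulVec hW hp ha x Δ))
      using 1
    simp only [zero_dotProduct, ContinuousLinearMap.comp_apply, matCLM_apply, zero_add,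
      dotProduct_transpose_mulVec, mulVec_zero, dotProduct_zero, dotProduct_add]
    ring

theorem hasHessianAt_dotProduct_transpose_mulVec (x : E)
    (hW : ∀ a p, HasFDerivAt (fun p => (J p)ᵀ *ᵥ a) (matCLM (W a)) p)
    {a : E → Fin d → ℝ} {p : E → Fin d → ℝ} {c : E → Fin k → ℝ} {A : E →L[ℝ] Fin d → ℝ}
    {P : E →L[ℝ] Fin d → ℝ} {C : E →L[ℝ] Fin k → ℝ} (ha : ∀ y, HasFDerivAt a A y)
    (hp : ∀ y, HasFDerivAt p P y) (hc : ∀ y, HasFDerivAt c C y) :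
    HasHessianAt (fun y => a y ⬝ᵥ (J (p y))ᵀ *ᵥ c y)
      (fun Δ δ => A δ ⬝ᵥ (W (c x) *ᵥ P Δ + (J (p x))ᵀ *ᵥ C Δ)
        + A Δ ⬝ᵥ (W (c x) *ᵥ P δ + (J (p x))ᵀ *ᵥ C δ)
        + a x ⬝ᵥ (W (C Δ) *ᵥ P δ + W (C δ) *ᵥ P Δ)) x := by
  have hWc := (isLinearMap_of_hasFDerivAt_mulVec (p := 0) fun a => hW a 0).hasLineDerivAt_mulVec hc
  refine hasHessianAt_of_hasLineDerivAt
    (f' := fun y δ => A δ ⬝ᵥ (J (p y))ᵀ *ᵥ c y + a y ⬝ᵥ (W (c y) *ᵥ P δ + (J (p y))ᵀ *ᵥ C δ))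
    ((contDiff_of_hasFDerivAt_const ha).dotProduct
      (((contDiff_matCLM_transpose hW).comp (contDiff_of_hasFDerivAt_const hp)).clm_apply
        (contDiff_of_hasFDerivAt_const hc)))
    (fun y δ => ((ha y).hasLineDerivAt δ).dotProduct (hasLineDerivAt_transpose_mulVec hW hp hc y δ))
    fun Δ δ => ?_
  convert ((hasLineDerivAt_const (A δ) x Δ).dotProduct
    (hasLineDerivAt_transpose_mulVec hW hp hc x Δ)).add
    (((ha x).hasLineDerivAt Δ).dotProduct ((hWc x Δ (P δ)).add
      (((hW (C δ) (p x)).comp x (hp x)).hasLineDerivAt Δ))) using 1 <;>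
    simp only [dotProduct_add, zero_dotProduct, zero_add, Function.comp_apply,
      ContinuousLinearMap.comp_apply, matCLM_apply]
  ring

end AffineJacobian

end Calculus

theorem fixNLP_KKT_matrix_general
    (d k m n : ℕ)
    (e : (Fin d → ℝ) → Fin k → ℝ) (g : (Fin d → ℝ) → Fin m → ℝ)
    (B : (Fin d → ℝ) → Matrix (Fin k) (Fin d) ℝ)
    (hB : ∀ p, HasFDerivAt e (matCLM (B p)) p)
    (G : (Fin d → ℝ) → Matrix (Fin m) (Fin d) ℝ)
    (hG : ∀ p, HasFDerivAt g (matCLM (G p)) p)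
    -- `e` and `g` are quadratic: the Jacobians `B` and `G` are affine in `q`,
    -- with constant derivatives `U₂`, `U₁` resp. `V`:
    (U₂ : (Fin k → ℝ) → Matrix (Fin d) (Fin d) ℝ)
    (hU₂ : ∀ (sv : Fin k → ℝ) (p : Fin d → ℝ),
      HasFDerivAt (fun p' => (B p')ᵀ.mulVec sv) (matCLM (U₂ sv)) p)
    (U₁ : (Fin d → ℝ) → Matrix (Fin k) (Fin d) ℝ)
    (hU₁ : ∀ (av : Fin d → ℝ) (p : Fin d → ℝ),
      HasFDerivAt (fun p' => (B p').mulVec av) (matCLM (U₁ av)) p)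
    (V : (Fin m → ℝ) → Matrix (Fin d) (Fin d) ℝ)
    (hV : ∀ (nv : Fin m → ℝ) (p : Fin d → ℝ),
      HasFDerivAt (fun p' => (G p')ᵀ.mulVec nv) (matCLM (V nv)) p)
    (C Cinv : Matrix (Fin k) (Fin k) ℝ)
    (hC : C.PosDef) (hCinv : C * Cinv = 1)
    (Δt : ℝ)
    (M : Matrix (Fin d) (Fin d) ℝ)
    (qim1 qi : Fin d → ℝ)
    (etil stil : Fin k → ℝ)
    (N₀ : Matrix (Fin d) (Fin n) ℝ)
    (bminus fbar : Fin d → ℝ)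
    (f : (Fin d → ℝ) → (Fin k → ℝ) → Fin n → ℝ)
    (hf : ∀ p sv, f p sv =
      N₀ᵀ.mulVec ((1 / Δt) • M.mulVec (p - (2 : ℝ) • qi + qim1)
        + (Δt / 2) • (bminus + (B ((1 / 2 : ℝ) • (qi + p)))ᵀ.mulVec sv)
        - (Δt / 2) • fbar))
    (F : (Fin k → ℝ) → Matrix (Fin n) (Fin d) ℝ)
    (hF : ∀ sv, F sv = N₀ᵀ * ((1 / Δt) • M + (Δt / 4) • U₂ sv))
    (L : (Fin d → ℝ) × (Fin k → ℝ) × (Fin k → ℝ) × (Fin k → ℝ) ×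
      (Fin n → ℝ) × (Fin m → ℝ) → ℝ)
    (hL : ∀ x : (Fin d → ℝ) × (Fin k → ℝ) × (Fin k → ℝ) × (Fin k → ℝ) ×
        (Fin n → ℝ) × (Fin m → ℝ),
      L x = (1 / 2 : ℝ) * ((x.2.1 - etil) ⬝ᵥ C.mulVec (x.2.1 - etil))
        + (1 / 2 : ℝ) * ((x.2.2.1 - stil) ⬝ᵥ Cinv.mulVec (x.2.2.1 - stil))
        + x.2.2.2.1 ⬝ᵥ (x.2.1 - e ((1 / 2 : ℝ) • (qi + x.1)))
        + x.2.2.2.2.1 ⬝ᵥ f x.1 x.2.2.1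
        + x.2.2.2.2.2 ⬝ᵥ g x.1)
    (q : Fin d → ℝ) (ep s lam : Fin k → ℝ) (mu : Fin n → ℝ) (nu : Fin m → ℝ)
    (Δq δq : Fin d → ℝ) (Δe Δs Δlam δe δs δlam : Fin k → ℝ)
    (Δmu δmu : Fin n → ℝ) (Δnu δnu : Fin m → ℝ) :
    fderiv ℝ (fderiv ℝ L) (q, ep, s, lam, mu, nu)
        (Δq, Δe, Δs, Δlam, Δmu, Δnu) (δq, δe, δs, δlam, δmu, δnu) =
      -- row q
      δq ⬝ᵥ ((-(1 / 4 : ℝ)) • U₂ lam + V nu).mulVec Δq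
        + δq ⬝ᵥ ((Δt / 4) • (U₁ (N₀.mulVec mu))ᵀ).mulVec Δs
        + δq ⬝ᵥ ((-(1 / 2 : ℝ)) • (B ((1 / 2 : ℝ) • (qi + q)))ᵀ).mulVec Δlam
        + δq ⬝ᵥ (F s)ᵀ.mulVec Δmu
        + δq ⬝ᵥ (G q)ᵀ.mulVec Δnu
      -- row e
        + δe ⬝ᵥ C.mulVec Δe
        + δe ⬝ᵥ Δlam
      -- row s
        + δs ⬝ᵥ ((Δt / 4) • U₁ (N₀.mulVec mu)).mulVec Δq
        + δs ⬝ᵥ Cinv.mulVec Δs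
        + δs ⬝ᵥ ((Δt / 2) • (B ((1 / 2 : ℝ) • (qi + q)) * N₀)).mulVec Δmu
      -- row λ
        + δlam ⬝ᵥ ((-(1 / 2 : ℝ)) • B ((1 / 2 : ℝ) • (qi + q))).mulVec Δq
        + δlam ⬝ᵥ Δe
      -- row μ
        + δmu ⬝ᵥ (F s).mulVec Δq
        + δmu ⬝ᵥ ((Δt / 2) • (N₀ᵀ * (B ((1 / 2 : ℝ) • (qi + q)))ᵀ)).mulVec Δs
      -- row ν
        + δnu ⬝ᵥ (G q).mulVec Δq := by
  set x₀ := (q, ep, s, lam, mu, nu)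
  have hH := (((((((hasHessianAt_dotProduct x₀
      (a := fun x => (1 / 2 : ℝ) • (x.2.1 - etil)) (b := fun x => C *ᵥ (x.2.1 - etil))
      (fun _ => by fun_prop) fun _ => by fun_prop).add
    (hasHessianAt_dotProduct x₀
      (a := fun x => (1 / 2 : ℝ) • (x.2.2.1 - stil)) (b := fun x => Cinv *ᵥ (x.2.2.1 - stil))
      (fun _ => by fun_prop) fun _ => by fun_prop)).add
    (hasHessianAt_dotProduct x₀ (a := fun x => x.2.2.2.1) (b := fun x => x.2.1)
      (fun _ => by fun_prop) fun _ => by fun_prop)).add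
    (hasHessianAt_dotProduct_comp x₀ hB hU₂
      (a := fun x => -x.2.2.2.1) (p := fun x => (1 / 2 : ℝ) • (qi + x.1))
      (fun _ => by fun_prop) fun _ => by fun_prop)).add
    (hasHessianAt_dotProduct x₀ (a := fun x => N₀ *ᵥ x.2.2.2.2.1)
      (b := fun x => (1 / Δt) • M *ᵥ (x.1 - (2 : ℝ) • qi + qim1) + (Δt / 2) • (bminus - fbar))
      (fun _ => by fun_prop) fun _ => by fun_prop)).add
    (hasHessianAt_dotProduct_transpose_mulVec x₀ hU₂
      (a := fun x => (Δt / 2) • N₀ *ᵥ x.2.2.2.2.1) (p := fun x => (1 / 2 : ℝ) • (qi + x.1))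
      (c := fun x => x.2.2.1) (fun _ => by fun_prop) (fun _ => by fun_prop)
      fun _ => by fun_prop)).add
    (hasHessianAt_dotProduct_comp x₀ hG hV (a := fun x => x.2.2.2.2.2) (p := fun x => x.1)
      (fun _ => by fun_prop) fun _ => by fun_prop)).congr (g := L) fun x => by
    rw [hL, hf, Matrix.dotProduct_transpose_mulVec N₀, dotProduct_comm _ (N₀ *ᵥ _)]
    simp only [smul_dotProduct, dotProduct_sub, dotProduct_add, dotProduct_smul, neg_dotProduct,
      sub_dotProduct, smul_eq_mul]
    ring
  rw [hH.2]
  have hCsymm := hC.isHermitian.dotProduct_mulVec_comm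
  have hCinvsymm := (inv_eq_right_inv hCinv ▸ hC.inv).isHermitian.dotProduct_mulVec_comm
  have hU₂lin := isLinearMap_of_hasFDerivAt_mulVec (p := 0) fun a => hU₂ a 0
  have hrel := dotProduct_mulVec_comm_of_hasFDerivAt (p := 0) (fun a => hU₁ a 0) fun a => hU₂ a 0
  simp only [hF, x₀, one_div, ContinuousLinearMap.comp_id, ContinuousLinearMap.id_comp,
    _root_.smul_apply, ContinuousLinearMap.comp_apply, ContinuousLinearMap.coe_snd',
    ContinuousLinearMap.coe_fst', matCLM_apply, smul_dotProduct, smul_eq_mul, _root_.neg_apply,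
    smul_add, mulVec_smul, dotProduct_smul, neg_dotProduct, mul_neg, hU₂lin.map_neg, neg_mulVec,
    smul_neg, dotProduct_neg, dotProduct_add, dotProduct_transpose_mulVec, neg_smul, add_mulVec,
    smul_mulVec, ← hrel, transpose_mul, transpose_add, transpose_smul, transpose_transpose,
    ← mulVec_mulVec, dotProduct_comm _ (N₀ *ᵥ _)]
  linear_combination (1 / 2 : ℝ) * hCsymm Δe δe + (1 / 2 : ℝ) * hCinvsymm Δs δs
    + dotProduct_comm Δlam δe

/-- The second Fréchet derivative of the fixNLP Lagrangian (for quadratic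
`e` and `g`, i.e. affine Jacobians `B` and `G`) is the bilinear form of the
symmetric KKT block matrix `S_fix`. -/
theorem fixNLP_KKT_matrix
    (d k m n : ℕ) (hd : 0 < d) (hk : 0 < k) (hm : 0 < m) (hn : 0 < n)
    (e : (Fin d → ℝ) → Fin k → ℝ) (g : (Fin d → ℝ) → Fin m → ℝ)
    (B : (Fin d → ℝ) → Matrix (Fin k) (Fin d) ℝ)
    (hB : ∀ p, HasFDerivAt e (matCLM (B p)) p)
    (G : (Fin d → ℝ) → Matrix (Fin m) (Fin d) ℝ)
    (hG : ∀ p, HasFDerivAt g (matCLM (G p)) p)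
    -- `e` and `g` are quadratic: the Jacobians `B` and `G` are affine in `q`,
    -- with constant derivatives `U₂`, `U₁` resp. `V`:
    (U₂ : (Fin k → ℝ) → Matrix (Fin d) (Fin d) ℝ)
    (hU₂ : ∀ (sv : Fin k → ℝ) (p : Fin d → ℝ),
      HasFDerivAt (fun p' => (B p')ᵀ.mulVec sv) (matCLM (U₂ sv)) p)
    (U₁ : (Fin d → ℝ) → Matrix (Fin k) (Fin d) ℝ)
    (hU₁ : ∀ (av : Fin d → ℝ) (p : Fin d → ℝ),
      HasFDerivAt (fun p' => (B p').mulVec av) (matCLM (U₁ av)) p)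
    (V : (Fin m → ℝ) → Matrix (Fin d) (Fin d) ℝ)
    (hV : ∀ (nv : Fin m → ℝ) (p : Fin d → ℝ),
      HasFDerivAt (fun p' => (G p')ᵀ.mulVec nv) (matCLM (V nv)) p)
    (C Cinv : Matrix (Fin k) (Fin k) ℝ)
    (hC : C.PosDef) (hCinv : C * Cinv = 1)
    (Δt : ℝ) (hΔt : 0 < Δt)
    (M : Matrix (Fin d) (Fin d) ℝ)
    (qim1 qi : Fin d → ℝ)
    (etil stil : Fin k → ℝ)
    (N₀ : Matrix (Fin d) (Fin n) ℝ)
    (bminus fbar : Fin d → ℝ)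
    (f : (Fin d → ℝ) → (Fin k → ℝ) → Fin n → ℝ)
    (hf : ∀ p sv, f p sv =
      N₀ᵀ.mulVec ((1 / Δt) • M.mulVec (p - (2 : ℝ) • qi + qim1)
        + (Δt / 2) • (bminus + (B ((1 / 2 : ℝ) • (qi + p)))ᵀ.mulVec sv)
        - (Δt / 2) • fbar))
    (F : (Fin k → ℝ) → Matrix (Fin n) (Fin d) ℝ)
    (hF : ∀ sv, F sv = N₀ᵀ * ((1 / Δt) • M + (Δt / 4) • U₂ sv))
    (L : (Fin d → ℝ) × (Fin k → ℝ) × (Fin k → ℝ) × (Fin k → ℝ) ×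
      (Fin n → ℝ) × (Fin m → ℝ) → ℝ)
    (hL : ∀ x : (Fin d → ℝ) × (Fin k → ℝ) × (Fin k → ℝ) × (Fin k → ℝ) ×
        (Fin n → ℝ) × (Fin m → ℝ),
      L x = (1 / 2 : ℝ) * ((x.2.1 - etil) ⬝ᵥ C.mulVec (x.2.1 - etil))
        + (1 / 2 : ℝ) * ((x.2.2.1 - stil) ⬝ᵥ Cinv.mulVec (x.2.2.1 - stil))
        + x.2.2.2.1 ⬝ᵥ (x.2.1 - e ((1 / 2 : ℝ) • (qi + x.1)))
        + x.2.2.2.2.1 ⬝ᵥ f x.1 x.2.2.1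
        + x.2.2.2.2.2 ⬝ᵥ g x.1)
    (q : Fin d → ℝ) (ep s lam : Fin k → ℝ) (mu : Fin n → ℝ) (nu : Fin m → ℝ)
    (Δq δq : Fin d → ℝ) (Δe Δs Δlam δe δs δlam : Fin k → ℝ)
    (Δmu δmu : Fin n → ℝ) (Δnu δnu : Fin m → ℝ) :
    fderiv ℝ (fderiv ℝ L) (q, ep, s, lam, mu, nu)
        (Δq, Δe, Δs, Δlam, Δmu, Δnu) (δq, δe, δs, δlam, δmu, δnu) =
      -- row q
      δq ⬝ᵥ ((-(1 / 4 : ℝ)) • U₂ lam + V nu).mulVec Δq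
        + δq ⬝ᵥ ((Δt / 4) • (U₁ (N₀.mulVec mu))ᵀ).mulVec Δs
        + δq ⬝ᵥ ((-(1 / 2 : ℝ)) • (B ((1 / 2 : ℝ) • (qi + q)))ᵀ).mulVec Δlam
        + δq ⬝ᵥ (F s)ᵀ.mulVec Δmu
        + δq ⬝ᵥ (G q)ᵀ.mulVec Δnu
      -- row e
        + δe ⬝ᵥ C.mulVec Δe
        + δe ⬝ᵥ Δlam
      -- row s
        + δs ⬝ᵥ ((Δt / 4) • U₁ (N₀.mulVec mu)).mulVec Δq
        + δs ⬝ᵥ Cinv.mulVec Δs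
        + δs ⬝ᵥ ((Δt / 2) • (B ((1 / 2 : ℝ) • (qi + q)) * N₀)).mulVec Δmu
      -- row λ
        + δlam ⬝ᵥ ((-(1 / 2 : ℝ)) • B ((1 / 2 : ℝ) • (qi + q))).mulVec Δq
        + δlam ⬝ᵥ Δe
      -- row μ
        + δmu ⬝ᵥ (F s).mulVec Δq
        + δmu ⬝ᵥ ((Δt / 2) • (N₀ᵀ * (B ((1 / 2 : ℝ) • (qi + q)))ᵀ)).mulVec Δs
      -- row ν
        + δnu ⬝ᵥ (G q).mulVec Δq :=
  fixNLP_KKT_matrix_general d k m n e g B hB G hG U₂ hU₂ U₁ hU₁ V hV C Cinv hC hCinv Δt M qim1 qi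
    etil stil N₀ bminus fbar f hf F hF L hL q ep s lam mu nu Δq δq Δe Δs Δlam δe δs δlam Δmu δmu Δnu
    δnu
end

section
/- Let d₁, d₂, d₃ ∈ ℝ³ be mutually orthonormal (dᵢ·dⱼ = δᵢⱼ) and let q = (φ₀, d₁, d₂, d₃) ∈ ℝ¹² for any φ₀ ∈ ℝ³. Let G(q) be the 6×12 matrix whose block rows (each block of size 3) are [0, d₁ᵀ, 0, 0], [0, 0, d₂ᵀ, 0], [0, 0, 0, d₃ᵀ], [0, 0, d₃ᵀ, d₂ᵀ], [0, d₃ᵀ, 0, d₁ᵀ], [0, d₂ᵀ, d₁ᵀ, 0], and let N(q) be the 12×6 matrix whose transpose has block rows [I, 0, 0, 0] and [0, d̂₁, d̂₂, d̂₃], where d̂ x = d × x. Then N(q) has rank 6 and the column space of N(q) equals the kernel of G(q); in particular dim ker G(q) = 6. -/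
open Matrix

/-- The zero 3-vector (as a row block). -/
def z3 : Fin 3 → ℝ := fun _ => 0

/-- The Jacobian matrix `G(q)` of the orthonormality constraint of the
geometrically exact beam. -/
def beamG (d₁ d₂ d₃ : Fin 3 → ℝ) : Matrix (Fin 6) (Fin 4 × Fin 3) ℝ :=
  Matrix.of fun r p =>
    ![![z3, d₁, z3, z3],
      ![z3, z3, d₂, z3],
      ![z3, z3, z3, d₃],
      ![z3, z3, d₃, d₂],
      ![z3, d₃, z3, d₁],
      ![z3, d₂, d₁, z3]] r p.1 p.2

/-- The transpose of the nodal null-space matrix `N(q)`, with block rows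
`[I, 0, 0, 0]` and `[0, d̂₁, d̂₂, d̂₃]`. -/
def beamNT (d₁ d₂ d₃ : Fin 3 → ℝ) : Matrix (Fin 6) (Fin 4 × Fin 3) ℝ :=
  Matrix.of fun c p =>
    ![![(1 : Matrix (Fin 3) (Fin 3) ℝ) 0, z3, z3, z3],
      ![(1 : Matrix (Fin 3) (Fin 3) ℝ) 1, z3, z3, z3],
      ![(1 : Matrix (Fin 3) (Fin 3) ℝ) 2, z3, z3, z3],
      ![z3, hat3 d₁ 0, hat3 d₂ 0, hat3 d₃ 0],
      ![z3, hat3 d₁ 1, hat3 d₂ 1, hat3 d₃ 1],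
      ![z3, hat3 d₁ 2, hat3 d₂ 2, hat3 d₃ 2]] c p.1 p.2

/-- The nodal null-space matrix `N(q)` of the geometrically exact beam. -/
def beamN (d₁ d₂ d₃ : Fin 3 → ℝ) : Matrix (Fin 4 × Fin 3) (Fin 6) ℝ :=
  (beamNT d₁ d₂ d₃)ᵀ

/-! `N(q)` sends `(a, ω)` to the infinitesimal rigid motion `(a, ω × d₁, ω × d₂, ω × d₃)`, while
`G(q)` applied to `(x, y₁, y₂, y₃)` reads off the diagonal and twice the off-diagonal part of the
symmetrised matrix `(dᵢ · yⱼ)`; hence `G N = 0` by the antisymmetry of the triple product.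
`N` is injective, since a vector whose cross products with two orthonormal vectors vanish is zero,
and `G` is onto, every value being attained by `yᵢ = Σⱼ sᵢⱼ dⱼ` for a suitable symmetric `(sᵢⱼ)`.
As `6 + 6 = 12`, the range of `N` is then the kernel of `G`. -/

open Module

theorem LinearMap.range_eq_ker_of_finrank_add_finrank_eq {K U V W : Type*} [Field K]
    [AddCommGroup U] [Module K U] [AddCommGroup V] [Module K V] [AddCommGroup W] [Module K W]
    [FiniteDimensional K V] {f : U →ₗ[K] V} {g : V →ₗ[K] W} (hgf : g ∘ₗ f = 0)
    (hf : Function.Injective f) (hg : Function.Surjective g)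
    (hdim : finrank K U + finrank K W = finrank K V) :
    LinearMap.range f = LinearMap.ker g := by
  refine Submodule.eq_of_le_of_finrank_le (LinearMap.range_le_ker_iff.mpr hgf) ?_
  have hrank := g.finrank_range_add_finrank_ker
  rw [LinearMap.range_eq_top.mpr hg, finrank_top] at hrank
  rw [LinearMap.finrank_range_of_inj hf]
  omega

section CrossProduct

variable {R : Type*} [CommRing R]

theorem dotProduct_cross_add_dotProduct_cross (u v w : Fin 3 → R) :
    u ⬝ᵥ w ⨯₃ v + v ⬝ᵥ w ⨯₃ u = 0 := by
  rw [triple_product_permutation u, triple_product_permutation v, ← dotProduct_add,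
    cross_anticomm', dotProduct_zero]

theorem eq_smul_of_cross_eq_zero {v w : Fin 3 → R} (hv : v ⬝ᵥ v = 1) (h : w ⨯₃ v = 0) :
    w = (w ⬝ᵥ v) • v := by
  have := cross_cross_eq_smul_sub_smul w v v
  rw [h, hv, one_smul, LinearMap.map_zero, LinearMap.zero_apply] at this
  exact (sub_eq_zero.mp this.symm).symm

theorem eq_zero_of_cross_eq_zero_of_orthonormal {u v w : Fin 3 → R} (hu : u ⬝ᵥ u = 1)
    (hv : v ⬝ᵥ v = 1) (huv : u ⬝ᵥ v = 0) (hwu : w ⨯₃ u = 0) (hwv : w ⨯₃ v = 0) : w = 0 := by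
  have hw_u := eq_smul_of_cross_eq_zero hu hwu
  have hw_v := eq_smul_of_cross_eq_zero hv hwv
  have hdot : w ⬝ᵥ u = 0 := by
    rw [hw_v, smul_dotProduct, dotProduct_comm v, huv, smul_zero]
  rw [hw_u, hdot, zero_smul]

end CrossProduct

theorem beamN_mulVec (d₁ d₂ d₃ : Fin 3 → ℝ) (v : Fin 6 → ℝ) :
    beamN d₁ d₂ d₃ *ᵥ v = Function.uncurry
      ![![v 0, v 1, v 2], ![v 3, v 4, v 5] ⨯₃ d₁, ![v 3, v 4, v 5] ⨯₃ d₂,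
        ![v 3, v 4, v 5] ⨯₃ d₃] := by
  ext ⟨i, j⟩
  fin_cases i <;> fin_cases j <;>
    simp [beamN, beamNT, hat3, z3, mulVec, dotProduct, Fin.sum_univ_succ, cross_apply] <;> ring

theorem beamG_mulVec_uncurry (d₁ d₂ d₃ : Fin 3 → ℝ) (y : Fin 4 → Fin 3 → ℝ) :
    beamG d₁ d₂ d₃ *ᵥ Function.uncurry y =
      ![d₁ ⬝ᵥ y 1, d₂ ⬝ᵥ y 2, d₃ ⬝ᵥ y 3, d₃ ⬝ᵥ y 2 + d₂ ⬝ᵥ y 3, d₃ ⬝ᵥ y 1 + d₁ ⬝ᵥ y 3,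
        d₂ ⬝ᵥ y 1 + d₁ ⬝ᵥ y 2] := by
  ext r
  fin_cases r <;>
    simp [beamG, z3, mulVec, dotProduct, Fintype.sum_prod_type, Fin.sum_univ_succ]

theorem beamG_mul_beamN (d₁ d₂ d₃ : Fin 3 → ℝ) : beamG d₁ d₂ d₃ * beamN d₁ d₂ d₃ = 0 := by
  refine ext_iff_mulVec.mpr fun v => ?_
  rw [← mulVec_mulVec, zero_mulVec, beamN_mulVec, beamG_mulVec_uncurry]
  ext r
  fin_cases r <;> simp [dot_cross_self, dotProduct_cross_add_dotProduct_cross]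

theorem beamN_mulVecLin_injective {d₁ d₂ d₃ : Fin 3 → ℝ} (h11 : d₁ ⬝ᵥ d₁ = 1)
    (h22 : d₂ ⬝ᵥ d₂ = 1) (h12 : d₁ ⬝ᵥ d₂ = 0) :
    Function.Injective (beamN d₁ d₂ d₃).mulVecLin := by
  refine (injective_iff_map_eq_zero _).mpr fun v hv => ?_
  rw [mulVecLin_apply, beamN_mulVec] at hv
  have hblock (i : Fin 4) (j : Fin 3) := congrFun hv (i, j)
  have hω : ![v 3, v 4, v 5] = 0 :=
    eq_zero_of_cross_eq_zero_of_orthonormal h11 h22 h12 (funext (hblock 1)) (funext (hblock 2))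
  ext i
  fin_cases i
  exacts [hblock 0 0, hblock 0 1, hblock 0 2, congrFun hω 0, congrFun hω 1, congrFun hω 2]

theorem beamG_mulVecLin_surjective {d₁ d₂ d₃ : Fin 3 → ℝ} (h11 : d₁ ⬝ᵥ d₁ = 1)
    (h22 : d₂ ⬝ᵥ d₂ = 1) (h33 : d₃ ⬝ᵥ d₃ = 1) (h12 : d₁ ⬝ᵥ d₂ = 0) (h13 : d₁ ⬝ᵥ d₃ = 0)
    (h23 : d₂ ⬝ᵥ d₃ = 0) : Function.Surjective (beamG d₁ d₂ d₃).mulVecLin := by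
  intro c
  refine ⟨Function.uncurry ![0,
    c 0 • d₁ + (c 5 / 2) • d₂ + (c 4 / 2) • d₃,
    (c 5 / 2) • d₁ + c 1 • d₂ + (c 3 / 2) • d₃,
    (c 4 / 2) • d₁ + (c 3 / 2) • d₂ + c 2 • d₃], ?_⟩
  rw [mulVecLin_apply, beamG_mulVec_uncurry]
  ext r
  fin_cases r <;>
    simp [dotProduct_add, dotProduct_smul, dotProduct_comm d₂ d₁, dotProduct_comm d₃ d₁,
      dotProduct_comm d₃ d₂, h11, h22, h33, h12, h13, h23]

theorem beamN_nullspace_basis_general (d₁ d₂ d₃ : Fin 3 → ℝ)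
    (h11 : d₁ ⬝ᵥ d₁ = 1) (h22 : d₂ ⬝ᵥ d₂ = 1) (h33 : d₃ ⬝ᵥ d₃ = 1)
    (h12 : d₁ ⬝ᵥ d₂ = 0) (h13 : d₁ ⬝ᵥ d₃ = 0) (h23 : d₂ ⬝ᵥ d₃ = 0) :
    (beamN d₁ d₂ d₃).rank = 6 ∧
      LinearMap.range (beamN d₁ d₂ d₃).mulVecLin =
        LinearMap.ker (beamG d₁ d₂ d₃).mulVecLin ∧
      Module.finrank ℝ (LinearMap.ker (beamG d₁ d₂ d₃).mulVecLin) = 6 := by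
  have hN := beamN_mulVecLin_injective (d₃ := d₃) h11 h22 h12
  have hexact : LinearMap.range (beamN d₁ d₂ d₃).mulVecLin =
      LinearMap.ker (beamG d₁ d₂ d₃).mulVecLin := by
    refine LinearMap.range_eq_ker_of_finrank_add_finrank_eq ?_ hN
      (beamG_mulVecLin_surjective h11 h22 h33 h12 h13 h23) (by simp)
    rw [← mulVecLin_mul, beamG_mul_beamN, mulVecLin_zero]
  have hrank : (beamN d₁ d₂ d₃).rank = 6 := by
    rw [Matrix.rank, LinearMap.finrank_range_of_inj hN, finrank_fin_fun]
  exact ⟨hrank, hexact, hexact ▸ hrank⟩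

/-- For mutually orthonormal directors, the nodal null-space matrix `N(q)`
has rank 6 and its column space equals the kernel of the constraint Jacobian
`G(q)`; in particular `dim ker G(q) = 6`. -/
theorem beamN_nullspace_basis (φ₀ d₁ d₂ d₃ : Fin 3 → ℝ)
    (h11 : d₁ ⬝ᵥ d₁ = 1) (h22 : d₂ ⬝ᵥ d₂ = 1) (h33 : d₃ ⬝ᵥ d₃ = 1)
    (h12 : d₁ ⬝ᵥ d₂ = 0) (h13 : d₁ ⬝ᵥ d₃ = 0) (h23 : d₂ ⬝ᵥ d₃ = 0) :
    (beamN d₁ d₂ d₃).rank = 6 ∧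
      LinearMap.range (beamN d₁ d₂ d₃).mulVecLin =
        LinearMap.ker (beamG d₁ d₂ d₃).mulVecLin ∧
      Module.finrank ℝ (LinearMap.ker (beamG d₁ d₂ d₃).mulVecLin) = 6 :=
  beamN_nullspace_basis_general d₁ d₂ d₃ h11 h22 h33 h12 h13 h23
end
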